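/- arXiv:2001.07958 — 7 statements merged into one kernel-verified Lean document; each statement's English description precedes it below -/
import Mathlib

section
/- Consider the linear time-dependent system dz/dt = B(t)z(t) where B(t) is an n×n matrix with nonnegative off-diagonal entries for all t, and all entries of B(t) are bounded below by -M for some M > 0. Then every entry of the fundamental solution matrix U(t,s) is nonnegative for all t ≥ s ≥ 0; equivalently, if z(s) has all nonnegative entries, then z(t) has all nonnegative entries for all t ≥ s. -/
open Set Filter Topology

/-- Nonnegativity of solutions of a linear cooperative time-dependent system:
if `B t` has nonnegative off-diagonal entries and entries bounded below by `-M`,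
and `z` solves `z' = B t • z`, then nonnegativity of `z s` propagates forward. -/
theorem stmt_0 (n : ℕ) (B : ℝ → Matrix (Fin n) (Fin n) ℝ) (M : ℝ)
    (hB_cont : Continuous B)
    (hoff : ∀ t, ∀ i j : Fin n, i ≠ j → 0 ≤ B t i j)
    (hM : 0 < M) (hbd : ∀ t, ∀ i j : Fin n, -M ≤ B t i j)
    (z : ℝ → Fin n → ℝ)
    (hz : ∀ t, ∀ i : Fin n, HasDerivAt (fun τ => z τ i) ((B t).mulVec (z t) i) t)
    (s : ℝ) (hs : 0 ≤ s) (hz0 : ∀ i, 0 ≤ z s i) :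
    ∀ t, s ≤ t → ∀ i, 0 ≤ z t i := by
  intro T hT
  -- continuity of components of z
  have hzc : ∀ i, Continuous fun τ => z τ i := fun i =>
    continuous_iff_continuousAt.2 fun τ => (hz τ i).continuousAt
  -- negative-part sum
  set g : ℝ → ℝ := fun τ => ∑ i, max (-(z τ i)) 0 with hg_def
  have hg_cont : Continuous g := by
    apply continuous_finset_sum
    intro i _
    exact ((hzc i).neg.max continuous_const)
  have hg_nonneg : ∀ τ, 0 ≤ g τ := fun τ =>
    Finset.sum_nonneg fun i _ => le_max_right _ _
  have hterm_le : ∀ τ i, max (-(z τ i)) 0 ≤ g τ := fun τ i =>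
    Finset.single_le_sum (f := fun j => max (-(z τ j)) 0) (fun j _ => le_max_right _ _) (Finset.mem_univ i)
  -- bound on entries of B on [s, T]
  obtain ⟨K, hK0, hK⟩ : ∃ K, 0 ≤ K ∧ ∀ τ ∈ Icc s T, ∀ i j, |B τ i j| ≤ K := by
    have hcont : ContinuousOn (fun τ => ∑ i : Fin n, ∑ j : Fin n, |B τ i j|)
        (Icc s T) := by
      apply Continuous.continuousOn
      apply continuous_finset_sum; intro i _
      apply continuous_finset_sum; intro j _
      exact ((continuous_apply j).comp ((continuous_apply i).comp hB_cont)).abs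
    obtain ⟨C, hC⟩ := (isCompact_Icc).exists_bound_of_continuousOn hcont
    refine ⟨max C 0, le_max_right _ _, fun τ hτ i j => ?_⟩
    have h1 : |B τ i j| ≤ ∑ i : Fin n, ∑ j : Fin n, |B τ i j| := by
      calc |B τ i j| ≤ ∑ j : Fin n, |B τ i j| :=
            Finset.single_le_sum (f := fun k => |B τ i k|)
              (fun k _ => abs_nonneg _) (Finset.mem_univ j)
        _ ≤ ∑ i : Fin n, ∑ j : Fin n, |B τ i j| :=
            Finset.single_le_sum (f := fun k => ∑ j : Fin n, |B τ k j|)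
              (fun k _ => Finset.sum_nonneg fun _ _ => abs_nonneg _)
              (Finset.mem_univ i)
    have h2 := hC τ hτ
    rw [Real.norm_eq_abs] at h2
    have h3 : (∑ i : Fin n, ∑ j : Fin n, |B τ i j|) ≤ C :=
      (le_abs_self _).trans h2
    exact h1.trans (h3.trans (le_max_left _ _))
  -- Grönwall
  have key : ∀ x ∈ Icc s T, g x ≤ gronwallBound 0 ((n : ℝ) * K) 0 (x - s) := by
    apply le_gronwallBound_of_liminf_deriv_right_le (f' := fun τ => (n : ℝ) * K * g τ)
      hg_cont.continuousOn
    · -- liminf slope condition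
      intro τ hτ r hr
      have hτ' : τ ∈ Icc s T := ⟨hτ.1, hτ.2.le⟩
      set S : Finset (Fin n) := Finset.univ.filter (fun i => z τ i ≤ 0) with hS
      -- the limit of the comparison quotient
      have hL : Filter.Tendsto (fun u => ∑ i ∈ S, max ((u - τ)⁻¹ * (-(z u i - z τ i))) 0)
          (𝓝[>] τ) (𝓝 (∑ i ∈ S, max (-((B τ).mulVec (z τ) i)) 0)) := by
        apply tendsto_finset_sum
        intro i _
        have h1 : Filter.Tendsto (slope (fun u => z u i) τ) (𝓝[≠] τ)
            (𝓝 ((B τ).mulVec (z τ) i)) := hasDerivAt_iff_tendsto_slope.mp (hz τ i)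
        have h2 : Filter.Tendsto (slope (fun u => z u i) τ) (𝓝[>] τ)
            (𝓝 ((B τ).mulVec (z τ) i)) :=
          h1.mono_left (nhdsWithin_mono τ (fun x hx => ne_of_gt hx))
        have h3 := h2.neg.max (tendsto_const_nhds (x := (0 : ℝ)))
        refine h3.congr (fun u => ?_)
        simp only [slope_def_field, div_eq_inv_mul]
        congr 1
        ring
      -- bound the limit
      have hLbound : (∑ i ∈ S, max (-((B τ).mulVec (z τ) i)) 0) ≤ (n : ℝ) * K * g τ := by
        have hper : ∀ i ∈ S, max (-((B τ).mulVec (z τ) i)) 0 ≤ K * g τ := by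
          intro i hi
          apply max_le _ (mul_nonneg hK0 (hg_nonneg τ))
          have hzi : z τ i ≤ 0 := by simpa [hS] using hi
          have : -((B τ).mulVec (z τ) i) = ∑ j, -(B τ i j * z τ j) := by
            simp [Matrix.mulVec, dotProduct]
          rw [this]
          have hj : ∀ j : Fin n, -(B τ i j * z τ j) ≤ K * max (-(z τ j)) 0 := by
            intro j
            have hKb := hK τ hτ' i j
            have hbK : B τ i j ≤ K := (le_abs_self _).trans hKb
            have hm0 : 0 ≤ max (-(z τ j)) 0 := le_max_right _ _
            rcases eq_or_ne j i with rfl | hne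
            · -- z τ j ≤ 0, so -(z τ j) = max (-(z τ j)) 0
              have : max (-(z τ j)) 0 = -(z τ j) := max_eq_left (by linarith)
              nlinarith [this]
            · have hBnn : 0 ≤ B τ i j := hoff τ i j (Ne.symm hne)
              have hle : -(z τ j) ≤ max (-(z τ j)) 0 := le_max_left _ _
              nlinarith
          calc ∑ j, -(B τ i j * z τ j) ≤ ∑ j, K * max (-(z τ j)) 0 :=
                Finset.sum_le_sum fun j _ => hj j
            _ = K * g τ := by rw [hg_def, Finset.mul_sum]
        calc (∑ i ∈ S, max (-((B τ).mulVec (z τ) i)) 0) ≤ ∑ _i ∈ S, K * g τ :=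
              Finset.sum_le_sum hper
          _ = (S.card : ℝ) * (K * g τ) := by rw [Finset.sum_const, nsmul_eq_mul]
          _ ≤ (n : ℝ) * (K * g τ) := by
              apply mul_le_mul_of_nonneg_right _ (mul_nonneg hK0 (hg_nonneg τ))
              exact_mod_cast (by simpa using Finset.card_le_card (Finset.subset_univ S) :
                S.card ≤ n)
          _ = (n : ℝ) * K * g τ := by ring
      -- eventual facts
      have hq : ∀ᶠ u in 𝓝[>] τ, (∑ i ∈ S, max ((u - τ)⁻¹ * (-(z u i - z τ i))) 0) < r :=
        hL.eventually_lt_const (lt_of_le_of_lt hLbound hr)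
      have hA : ∀ᶠ u in 𝓝[>] τ, ∀ i ∈ Sᶜ, 0 < z u i := by
        rw [Filter.eventually_all_finset]
        intro i hi
        have hpos : 0 < z τ i := by
          by_contra h
          exact (Finset.mem_compl.mp hi) (by simp [hS]; linarith)
        have := ((hzc i).tendsto τ).eventually (eventually_gt_nhds hpos)
        exact this.filter_mono nhdsWithin_le_nhds
      have hmem : ∀ᶠ u in 𝓝[>] τ, τ < u := eventually_mem_nhdsWithin
      apply (((hq.and hA).and hmem).mono ?_).frequently
      rintro u ⟨⟨hqu, hAu⟩, htu⟩
      have hinv : 0 ≤ (u - τ)⁻¹ := inv_nonneg.mpr (by linarith)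
      have hsum : g u - g τ ≤ ∑ i ∈ S, max (-(z u i - z τ i)) 0 := by
        have hsplit : g u - g τ = ∑ i, (max (-(z u i)) 0 - max (-(z τ i)) 0) := by
          rw [hg_def, Finset.sum_sub_distrib]
        rw [hsplit, ← Finset.sum_filter_add_sum_filter_not Finset.univ (fun i => z τ i ≤ 0)]
        have h2 : (∑ i ∈ Finset.univ.filter (fun i => ¬ z τ i ≤ 0),
            (max (-(z u i)) 0 - max (-(z τ i)) 0)) = 0 := by
          apply Finset.sum_eq_zero
          intro i hi
          have hiτ : ¬ z τ i ≤ 0 := (Finset.mem_filter.mp hi).2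
          have hinS : i ∈ Sᶜ := Finset.mem_compl.mpr (by simp [hS]; linarith)
          have h3 : 0 < z u i := hAu i hinS
          have h4 : max (-(z u i)) 0 = 0 := max_eq_right (by linarith)
          have h5 : max (-(z τ i)) 0 = 0 := max_eq_right (by push_neg at hiτ; linarith)
          rw [h4, h5, sub_zero]
        have h1 : (∑ i ∈ Finset.univ.filter (fun i => z τ i ≤ 0),
            (max (-(z u i)) 0 - max (-(z τ i)) 0)) ≤ ∑ i ∈ S, max (-(z u i - z τ i)) 0 := by
          rw [hS]
          apply Finset.sum_le_sum
          intro i hi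
          have hiτ : z τ i ≤ 0 := (Finset.mem_filter.mp hi).2
          have h6 : max (-(z τ i)) 0 = -(z τ i) := max_eq_left (by linarith)
          rcases le_or_gt (z u i) 0 with h | h
          · have h7 : max (-(z u i)) 0 = -(z u i) := max_eq_left (by linarith)
            have h8 : -(z u i - z τ i) ≤ max (-(z u i - z τ i)) 0 := le_max_left _ _
            linarith
          · have h7 : max (-(z u i)) 0 = 0 := max_eq_right (by linarith)
            have h8 : (0:ℝ) ≤ max (-(z u i - z τ i)) 0 := le_max_right _ _
            linarith
        linarith
      calc (u - τ)⁻¹ * (g u - g τ) ≤ (u - τ)⁻¹ * ∑ i ∈ S, max (-(z u i - z τ i)) 0 :=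
            mul_le_mul_of_nonneg_left hsum hinv
        _ = ∑ i ∈ S, (u - τ)⁻¹ * max (-(z u i - z τ i)) 0 := Finset.mul_sum _ _ _
        _ = ∑ i ∈ S, max ((u - τ)⁻¹ * (-(z u i - z τ i))) 0 := by
            apply Finset.sum_congr rfl
            intro i _
            rw [mul_max_of_nonneg _ _ hinv, mul_zero]
        _ < r := hqu
    · -- g s = 0
      have : g s = 0 := Finset.sum_eq_zero fun i _ => by
        have := hz0 i; simp [max_eq_right, neg_nonpos.2 this]
      simp [this]
    · intro τ hτ
      simp [mul_comm]
  have hgT : g T ≤ 0 := by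
    have := key T ⟨hT, le_refl T⟩
    rwa [gronwallBound_ε0, zero_mul] at this
  have hgT0 : g T = 0 := le_antisymm hgT (hg_nonneg T)
  intro i
  have h1 : max (-(z T i)) 0 = 0 := by
    have h2 : max (-(z T i)) 0 ≤ 0 := hgT0 ▸ hterm_le T i
    exact le_antisymm h2 (le_max_right _ _)
  have := le_max_left (-(z T i)) 0
  rw [h1] at this
  linarith
end

section
/- The product of (n-1) many n×n nonnegative matrices, each of which is irreducible and has strictly positive diagonal entries, is a matrix with all entries strictly positive. -/
/-- A nonnegative matrix is irreducible if its associated directed graph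
(arc from `j` to `i` whenever `A i j > 0`) is strongly connected. -/
def IsIrreducibleMat {n : ℕ} (A : Matrix (Fin n) (Fin n) ℝ) : Prop :=
  ∀ i j : Fin n, Relation.TransGen (fun a b : Fin n => 0 < A b a) i j

/-- On any path of `r` from outside `S` to inside `S`, some edge crosses into `S`. -/
lemma cross_lemma {n : ℕ} {r : Fin n → Fin n → Prop} {a b : Fin n}
    (h : Relation.TransGen r a b) (S : Finset (Fin n)) (ha : a ∉ S) (hb : b ∈ S) :
    ∃ x ∈ S, ∃ y ∉ S, r y x := by
  induction h with
  | single hab => exact ⟨_, hb, _, ha, hab⟩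
  | @tail b c hab hbc ih =>
    by_cases hm : b ∈ S
    · exact ih hm
    · exact ⟨c, hb, b, hm, hbc⟩

lemma key_lemma {n : ℕ} (i : Fin n) (l : List (Matrix (Fin n) (Fin n) ℝ))
    (hl : ∀ M ∈ l, (∀ a b : Fin n, 0 ≤ M a b) ∧ IsIrreducibleMat M ∧ (∀ a, 0 < M a a)) :
    (∀ a b : Fin n, 0 ≤ l.prod a b) ∧
      i ∈ Finset.univ.filter (fun j => 0 < l.prod i j) ∧
      min n (l.length + 1) ≤ (Finset.univ.filter (fun j => 0 < l.prod i j)).card := by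
  induction l using List.reverseRecOn with
  | nil =>
    refine ⟨?_, ?_, ?_⟩
    · intro a b
      simp [Matrix.one_apply]
      split <;> norm_num
    · rw [Finset.mem_filter]; simp [Matrix.one_apply]
    · have : i ∈ Finset.univ.filter (fun j => 0 < (List.prod ([] : List (Matrix (Fin n) (Fin n) ℝ))) i j) := by
        rw [Finset.mem_filter]; simp [Matrix.one_apply]
      have := Finset.card_pos.mpr ⟨i, this⟩
      simp only [List.length_nil]
      omega
  | append_singleton l M ih =>
    obtain ⟨hMnn, hMirr, hMdiag⟩ := hl M (by simp)
    obtain ⟨hnn, hiS, hcard⟩ := ih (fun N hN => hl N (by simp [hN]))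
    set P := l.prod with hP
    have hprod : (l ++ [M]).prod = P * M := by simp [hP]
    set S : Finset (Fin n) := Finset.univ.filter (fun j => 0 < P i j) with hS
    set S' : Finset (Fin n) := Finset.univ.filter (fun j => 0 < (l ++ [M]).prod i j) with hS'
    -- nonnegativity of new product entries
    have hnn' : ∀ a b : Fin n, 0 ≤ (l ++ [M]).prod a b := by
      intro a b
      rw [hprod, Matrix.mul_apply]
      exact Finset.sum_nonneg fun k _ => mul_nonneg (hnn a k) (hMnn k b)
    -- one positive term makes entry positive
    have hpos : ∀ (j k : Fin n), 0 < P i k → 0 < M k j → 0 < (l ++ [M]).prod i j := by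
      intro j k h1 h2
      rw [hprod, Matrix.mul_apply]
      have : 0 < P i k * M k j := mul_pos h1 h2
      calc (0:ℝ) < P i k * M k j := this
        _ ≤ ∑ x, P i x * M x j :=
          Finset.single_le_sum (fun x _ => mul_nonneg (hnn i x) (hMnn x j)) (Finset.mem_univ k)
    have hsub : S ⊆ S' := by
      intro j hj
      rw [hS, Finset.mem_filter] at hj
      rw [hS', Finset.mem_filter]
      exact ⟨Finset.mem_univ _, hpos j j hj.2 (hMdiag j)⟩
    have hiS' : i ∈ S' := hsub hiS
    refine ⟨hnn', hiS', ?_⟩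
    by_cases huniv : S = Finset.univ
    · have : S' = Finset.univ := Finset.Subset.antisymm (Finset.subset_univ _) (huniv ▸ hsub)
      rw [hS'] at this ⊢
      rw [this, Finset.card_univ, Fintype.card_fin]
      omega
    · -- there is y ∉ S; use irreducibility to grow
      obtain ⟨y, hy⟩ : ∃ y, y ∉ S := by
        by_contra hc
        push_neg at hc
        exact huniv (Finset.eq_univ_iff_forall.mpr hc)
      obtain ⟨x, hx, y', hy', hr⟩ := cross_lemma (hMirr y i) S hy hiS
      -- hr : 0 < M x y'
      have hxpos : 0 < P i x := (Finset.mem_filter.mp hx).2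
      have hy'S' : y' ∈ S' := by
        rw [hS', Finset.mem_filter]
        exact ⟨Finset.mem_univ _, hpos y' x hxpos hr⟩
      have hgrow : S.card + 1 ≤ S'.card := by
        have : S ∪ {y'} ⊆ S' := by
          intro z hz
          rcases Finset.mem_union.mp hz with h | h
          · exact hsub h
          · rw [Finset.mem_singleton] at h; exact h ▸ hy'S'
        have hcard2 : (S ∪ {y'}).card = S.card + 1 := by
          rw [Finset.union_comm, ← Finset.insert_eq, Finset.card_insert_of_notMem hy']
        calc S.card + 1 = (S ∪ {y'}).card := hcard2.symm
          _ ≤ S'.card := Finset.card_le_card this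
      have hle : S'.card ≤ n := by
        have := Finset.card_le_univ S'
        simpa using this
      simp only [List.length_append, List.length_singleton]
      omega

/-- The product of `n-1` many `n × n` nonnegative matrices, each irreducible with
strictly positive diagonal entries, has all entries strictly positive. -/
theorem stmt_3 (n : ℕ) (hn : 0 < n) (A : Fin (n - 1) → Matrix (Fin n) (Fin n) ℝ)
    (hnonneg : ∀ k, ∀ i j : Fin n, 0 ≤ A k i j)
    (hirred : ∀ k, IsIrreducibleMat (A k))
    (hdiag : ∀ k, ∀ i : Fin n, 0 < A k i i) :
    ∀ i j : Fin n, 0 < (List.ofFn A).prod i j := by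
  intro i j
  obtain ⟨-, -, hcard⟩ := key_lemma i (List.ofFn A) (by
    intro M hM
    rw [List.mem_ofFn] at hM
    obtain ⟨k, rfl⟩ := hM
    exact ⟨hnonneg k, hirred k, hdiag k⟩)
  rw [List.length_ofFn] at hcard
  have hmin : min n (n - 1 + 1) = n := by omega
  rw [hmin] at hcard
  have huniv : Finset.univ.filter (fun j => 0 < (List.ofFn A).prod i j) = Finset.univ := by
    apply Finset.eq_univ_of_card
    rw [Fintype.card_fin]
    have := Finset.card_le_univ (Finset.univ.filter (fun j => 0 < (List.ofFn A).prod i j))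
    simp at this
    omega
  have : j ∈ Finset.univ.filter (fun j => 0 < (List.ofFn A).prod i j) := by
    rw [huniv]; exact Finset.mem_univ j
  exact (Finset.mem_filter.mp this).2
end

section
/- Let f : ℝ^n_{≥0} → ℝ^n be continuously differentiable, subhomogeneous (f(ηx) ≥ ηf(x) for all η ∈ (0,1) and x ≥ 0), with f(0) = 0. Then for all x ≥ 0, f(x) ≤ Df(0)·x componentwise, where Df(0) is the Jacobian of f at 0. -/
/-- A `C¹`, subhomogeneous map `f` on the nonnegative orthant with `f 0 = 0` is
dominated by its linearization at the origin: `f x ≤ Df(0) x` componentwise. -/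
theorem stmt_4 (n : ℕ) (f : (Fin n → ℝ) → (Fin n → ℝ))
    (Df : (Fin n → ℝ) →L[ℝ] (Fin n → ℝ))
    (hC1 : ContDiffOn ℝ 1 f {x : Fin n → ℝ | ∀ v, 0 ≤ x v})
    (hDf : HasFDerivWithinAt f Df {x : Fin n → ℝ | ∀ v, 0 ≤ x v} 0)
    (hf0 : f 0 = 0)
    (hsub : ∀ η : ℝ, η ∈ Set.Ioo (0:ℝ) 1 → ∀ x : Fin n → ℝ, (∀ v, 0 ≤ x v) →
      η • f x ≤ f (η • x)) :
    ∀ x : Fin n → ℝ, (∀ v, 0 ≤ x v) → f x ≤ Df x := by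
  intro x hx
  -- curve h η = η • x
  have hcurve : HasDerivWithinAt (fun η : ℝ => η • x) x (Set.Ici 0) 0 := by
    simpa using ((hasDerivAt_id (0:ℝ)).smul_const x).hasDerivWithinAt
  have hmaps : Set.MapsTo (fun η : ℝ => η • x) (Set.Ici 0)
      {x : Fin n → ℝ | ∀ v, 0 ≤ x v} := by
    intro η hη v
    exact mul_nonneg hη (hx v)
  have hDf0 : HasFDerivWithinAt f Df {x : Fin n → ℝ | ∀ v, 0 ≤ x v}
      ((fun η : ℝ => η • x) 0) := by simpa using hDf
  have hcomp : HasDerivWithinAt (f ∘ fun η : ℝ => η • x) (Df x) (Set.Ici 0) 0 :=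
    hDf0.comp_hasDerivWithinAt 0 hcurve hmaps
  have hslope := hasDerivWithinAt_iff_tendsto_slope.mp hcomp
  have hsub' : Set.Ioi (0:ℝ) ⊆ Set.Ici 0 \ {0} := by
    intro η hη
    exact ⟨Set.mem_Ici.mpr (le_of_lt hη), ne_of_gt hη⟩
  have htend : Filter.Tendsto (fun η : ℝ => η⁻¹ • f (η • x))
      (nhdsWithin 0 (Set.Ioi 0)) (nhds (Df x)) := by
    have := hslope.mono_left (nhdsWithin_mono 0 hsub')
    refine this.congr' ?_
    filter_upwards [self_mem_nhdsWithin] with η hη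
    simp [slope, hf0, Function.comp]
  intro v
  have htendv : Filter.Tendsto (fun η : ℝ => (η⁻¹ • f (η • x)) v)
      (nhdsWithin 0 (Set.Ioi 0)) (nhds (Df x v)) :=
    (continuous_apply v).continuousAt.tendsto.comp htend
  refine ge_of_tendsto htendv ?_
  have hmem : Set.Ioo (0:ℝ) 1 ∈ nhdsWithin 0 (Set.Ioi 0) := by
    apply mem_nhdsWithin.mpr
    exact ⟨Set.Iio 1, isOpen_Iio, by norm_num, by
      intro η hη; exact ⟨hη.2, hη.1⟩⟩
  filter_upwards [hmem] with η hη
  have h1 := hsub η hη x hx v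
  have hηpos : (0:ℝ) < η := hη.1
  simp only [Pi.smul_apply, smul_eq_mul] at h1 ⊢
  rw [le_inv_mul_iff₀ hηpos]
  exact h1
end

section
/- Consider the scalar ODE di/dt ≥ -2 i(t) + α(t) with i(0) ≥ 0 and a nonnegative measurable function α(t). If there exist δ₁ > 0 and T₀ > 0 such that ∫_{kT₀}^{(k+1)T₀} α(s) ds ≥ δ₁ for all natural numbers k, then liminf_{t→∞} i(t) > 0; more precisely there exists c > 0 and T > 0 such that i(t) ≥ c for all t ≥ T. -/
open MeasureTheory intervalIntegral in
/-- If `i' ≥ -2 i + α` with `i 0 ≥ 0` and `α ≥ 0` has its integral over every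
interval `[k T₀, (k+1) T₀]` bounded below by `δ₁ > 0`, then `i` is eventually
uniformly bounded away from zero. -/
theorem stmt_5 (i i' α : ℝ → ℝ) (δ₁ T₀ : ℝ)
    (hδ : 0 < δ₁) (hT₀ : 0 < T₀)
    (hi0 : 0 ≤ i 0)
    (hderiv : ∀ t, 0 ≤ t → HasDerivAt i (i' t) t)
    (hi'cont : Continuous i')
    (hα_nonneg : ∀ t, 0 ≤ α t)
    (hα_int : ∀ a b : ℝ, IntervalIntegrable α MeasureTheory.volume a b)
    (hineq : ∀ t, 0 ≤ t → -2 * i t + α t ≤ i' t)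
    (hmean : ∀ k : ℕ, δ₁ ≤ ∫ s in ((k : ℝ) * T₀)..(((k : ℝ) + 1) * T₀), α s) :
    ∃ c > (0:ℝ), ∃ T > (0:ℝ), ∀ t, T ≤ t → c ≤ i t := by
  refine ⟨δ₁ * Real.exp (-(4*T₀)), by positivity, 2*T₀, by positivity, ?_⟩
  intro t ht
  have ht0 : 0 ≤ t := le_trans (by positivity) ht
  set g : ℝ → ℝ := fun s => Real.exp (2*s) * i s with hg
  set G : ℝ → ℝ := fun s => Real.exp (2*s) * (i' s + 2 * i s) with hG
  have hgderiv : ∀ s ∈ Set.Icc (0:ℝ) t, HasDerivAt g (G s) s := by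
    intro s hs
    have h1 : HasDerivAt (fun s => Real.exp (2*s)) (Real.exp (2*s) * 2) s := by
      simpa [Function.comp_def] using (Real.hasDerivAt_exp (2*s)).comp s ((hasDerivAt_id s).const_mul 2)
    have : HasDerivAt g (Real.exp (2 * s) * 2 * i s + Real.exp (2 * s) * i' s) s := h1.mul (hderiv s hs.1)
    convert this using 1
    simp only [hG]
    ring
  have hicont : ContinuousOn i (Set.Icc 0 t) := fun s hs =>
    ((hderiv s hs.1).continuousAt).continuousWithinAt
  have hGcont : ContinuousOn G (Set.Icc 0 t) := by
    apply ContinuousOn.mul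
    · exact (Real.continuous_exp.comp (continuous_const.mul continuous_id)).continuousOn
    · exact hi'cont.continuousOn.add (continuousOn_const.mul hicont)
  have hGnonneg : ∀ s ∈ Set.Icc (0:ℝ) t, 0 ≤ G s := by
    intro s hs
    have h1 : α s ≤ i' s + 2 * i s := by linarith [hineq s hs.1]
    have : (0:ℝ) ≤ i' s + 2 * i s := le_trans (hα_nonneg s) h1
    positivity
  have hGint : IntervalIntegrable G volume 0 t :=
    ContinuousOn.intervalIntegrable (by rwa [Set.uIcc_of_le ht0])
  have hft : g t - g 0 = ∫ s in (0:ℝ)..t, G s :=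
    (intervalIntegral.integral_eq_sub_of_hasDerivAt
      (fun s hs => hgderiv s (by rwa [Set.uIcc_of_le ht0] at hs)) hGint).symm
  -- choose k
  set n : ℕ := ⌊t / T₀⌋₊ with hn
  have htT : (2:ℝ) ≤ t / T₀ := (le_div_iff₀ hT₀).2 (by linarith)
  have hn2 : 2 ≤ n := Nat.le_floor (by exact_mod_cast htT)
  have hn1 : 1 ≤ n := le_trans (by norm_num) hn2
  set a : ℝ := ((n:ℝ) - 1) * T₀ with ha
  set b : ℝ := (n:ℝ) * T₀ with hb
  have hnle : (n:ℝ) ≤ t / T₀ := Nat.floor_le (by positivity)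
  have hnlt : t / T₀ < (n:ℝ) + 1 := Nat.lt_floor_add_one _
  have hbt : b ≤ t := by
    rw [hb]
    calc (n:ℝ) * T₀ ≤ (t / T₀) * T₀ := by nlinarith
    _ = t := by field_simp
  have hat : t - 2 * T₀ ≤ a := by
    have : t < ((n:ℝ) + 1) * T₀ := by
      calc t = (t / T₀) * T₀ := by field_simp
      _ < ((n:ℝ) + 1) * T₀ := by nlinarith
    rw [ha]; nlinarith
  have ha0 : 0 ≤ a := by
    have : (1:ℝ) ≤ (n:ℝ) := by exact_mod_cast hn1
    rw [ha]; nlinarith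
  have hab : a ≤ b := by rw [ha, hb]; nlinarith
  -- key integral bound
  have hmean' : δ₁ ≤ ∫ s in a..b, α s := by
    have := hmean (n - 1)
    have hcast : ((n - 1 : ℕ) : ℝ) = (n:ℝ) - 1 := by
      push_cast [Nat.cast_sub hn1]; ring
    rwa [hcast, sub_add_cancel] at this
  have hint_ab : IntervalIntegrable G volume a b := by
    apply hGint.mono_set
    rw [Set.uIcc_of_le hab, Set.uIcc_of_le ht0]
    exact Set.Icc_subset_Icc ha0 hbt
  have hRHSint : IntervalIntegrable (fun s => Real.exp (2*a) * α s) volume a b :=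
    (hα_int a b).const_mul _
  have hstep : Real.exp (2*a) * δ₁ ≤ ∫ s in a..b, G s := by
    have h1 : ∫ s in a..b, Real.exp (2*a) * α s ≤ ∫ s in a..b, G s := by
      apply intervalIntegral.integral_mono_on hab hRHSint hint_ab
      intro s hs
      have hs0 : 0 ≤ s := le_trans ha0 hs.1
      have hst : s ≤ t := le_trans hs.2 hbt
      have hα : α s ≤ i' s + 2 * i s := by linarith [hineq s hs0]
      have hexp : Real.exp (2*a) ≤ Real.exp (2*s) := Real.exp_le_exp.2 (by linarith [hs.1])
      calc Real.exp (2*a) * α s ≤ Real.exp (2*s) * α s :=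
            mul_le_mul_of_nonneg_right hexp (hα_nonneg s)
        _ ≤ Real.exp (2*s) * (i' s + 2 * i s) :=
            mul_le_mul_of_nonneg_left hα (Real.exp_pos _).le
    have h2 : Real.exp (2*a) * δ₁ ≤ ∫ s in a..b, Real.exp (2*a) * α s := by
      rw [intervalIntegral.integral_const_mul]
      exact mul_le_mul_of_nonneg_left hmean' (Real.exp_pos _).le
    linarith
  -- split integral
  have hint_0a : IntervalIntegrable G volume 0 a := by
    apply hGint.mono_set
    rw [Set.uIcc_of_le ha0, Set.uIcc_of_le ht0]
    exact Set.Icc_subset_Icc le_rfl (le_trans hab hbt)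
  have hint_bt : IntervalIntegrable G volume b t := by
    apply hGint.mono_set
    rw [Set.uIcc_of_le hbt, Set.uIcc_of_le ht0]
    exact Set.Icc_subset_Icc (le_trans ha0 hab) le_rfl
  have hsplit : ∫ s in (0:ℝ)..t, G s =
      (∫ s in (0:ℝ)..a, G s) + (∫ s in a..b, G s) + ∫ s in b..t, G s := by
    rw [intervalIntegral.integral_add_adjacent_intervals hint_0a hint_ab,
      intervalIntegral.integral_add_adjacent_intervals (hint_0a.trans hint_ab) hint_bt]
  have hnn1 : 0 ≤ ∫ s in (0:ℝ)..a, G s :=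
    intervalIntegral.integral_nonneg ha0
      (fun s hs => hGnonneg s ⟨hs.1, le_trans hs.2 (le_trans hab hbt)⟩)
  have hnn2 : 0 ≤ ∫ s in b..t, G s :=
    intervalIntegral.integral_nonneg hbt
      (fun s hs => hGnonneg s ⟨le_trans (le_trans ha0 hab) hs.1, hs.2⟩)
  have hgt : Real.exp (2*a) * δ₁ ≤ g t := by
    have hg0 : 0 ≤ g 0 := by simp [hg]; positivity
    rw [sub_eq_iff_eq_add] at hft
    rw [hft, hsplit]; linarith
  -- conclude
  have hgt' : Real.exp (2*a) * δ₁ ≤ Real.exp (2*t) * i t := hgt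
  have hexp2 : Real.exp (-(4*T₀)) * Real.exp (2*t) ≤ Real.exp (2*a) := by
    rw [← Real.exp_add, Real.exp_le_exp]; linarith
  have hit : Real.exp (-(4*T₀)) * Real.exp (2*t) * δ₁ ≤ Real.exp (2*t) * i t :=
    le_trans (mul_le_mul_of_nonneg_right hexp2 hδ.le) hgt'
  have hpos : (0:ℝ) < Real.exp (2*t) := Real.exp_pos _
  nlinarith [hpos]
end

section
/- Consider the unified cyber defense model di_v/dt = -h_v(i,β_v(t))·i_v + g_v(i,α_v(t),Γ(t))·(1-i_v) on [0,1]^n. If for each v and t, h̲_v ≤ h_v(i(t),β_v(t)) ≤ h̄_v and g̲_v ≤ g_v(i(t),α_v(t),Γ(t)) ≤ ḡ_v, then each coordinate i_v(t) satisfies e^{-(h̄_v+g̲_v)t}(i_v(0) - g̲_v/(h̄_v+g̲_v)) + g̲_v/(h̄_v+g̲_v) ≤ i_v(t) ≤ e^{-(h̲_v+ḡ_v)t}(i_v(0) - ḡ_v/(h̲_v+ḡ_v)) + ḡ_v/(h̲_v+ḡ_v) for all t ≥ 0, provided h̄_v + g̲_v > 0 and h̲_v + ḡ_v > 0. -/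
lemma key_lower (a b : ℝ) (ha : 0 < a) (f f' : ℝ → ℝ)
    (hf : ∀ t, 0 ≤ t → HasDerivAt f (f' t) t)
    (hge : ∀ t, 0 ≤ t → -a * f t + b ≤ f' t) :
    ∀ t, 0 ≤ t → Real.exp (-a * t) * (f 0 - b / a) + b / a ≤ f t := by
  set u : ℝ → ℝ := fun t => Real.exp (a * t) * f t - (b / a) * Real.exp (a * t) with hu_def
  have hu : ∀ t, 0 ≤ t →
      HasDerivAt u (Real.exp (a * t) * (f' t + a * f t - b)) t := by
    intro t ht
    have h1 : HasDerivAt (fun t : ℝ => a * t) a t := by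
      simpa using (hasDerivAt_id t).const_mul a
    have he := h1.exp
    have := (he.mul (hf t ht)).sub (he.const_mul (b / a))
    refine this.congr_deriv ?_
    field_simp [ha.ne']
    ring
  have hmono : MonotoneOn u (Set.Ici (0:ℝ)) := by
    apply monotoneOn_of_deriv_nonneg (convex_Ici 0)
    · exact fun t ht => (hu t ht).continuousAt.continuousWithinAt
    · rw [interior_Ici]
      exact fun t ht => (hu t (le_of_lt ht)).differentiableAt.differentiableWithinAt
    · rw [interior_Ici]
      intro t ht
      rw [(hu t ht.le).deriv]
      have := hge t ht.le
      have hexp := Real.exp_pos (a * t)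
      nlinarith
  intro t ht
  have h0 := hmono (Set.self_mem_Ici) (Set.mem_Ici.mpr ht) ht
  simp only [hu_def, mul_zero, Real.exp_zero, one_mul, mul_one] at h0
  have hexp : (0:ℝ) < Real.exp (a * t) := Real.exp_pos _
  rw [show -a * t = -(a * t) by ring, Real.exp_neg, inv_mul_eq_div,
    div_add' _ _ _ (ne_of_gt hexp), div_le_iff₀ hexp]
  nlinarith

lemma key_upper (a b : ℝ) (ha : 0 < a) (f f' : ℝ → ℝ)
    (hf : ∀ t, 0 ≤ t → HasDerivAt f (f' t) t)
    (hle : ∀ t, 0 ≤ t → f' t ≤ -a * f t + b) :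
    ∀ t, 0 ≤ t → f t ≤ Real.exp (-a * t) * (f 0 - b / a) + b / a := by
  intro t ht
  have := key_lower a (-b) ha (fun s => -f s) (fun s => -f' s)
    (fun s hs => (hf s hs).neg)
    (fun s hs => by have := hle s hs; linarith) t ht
  have hb : -b / a = -(b / a) := by ring
  rw [hb] at this
  nlinarith [this]

/-- Bounding each coordinate of the unified cyber defense dynamics
`i_v' = -H_v(t) i_v + G_v(t) (1 - i_v)` in terms of uniform bounds on `H_v`, `G_v`. -/
theorem stmt_11 (n : ℕ) (i : ℝ → Fin n → ℝ) (H G : Fin n → ℝ → ℝ)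
    (hlo hhi glo ghi : Fin n → ℝ)
    (hcube : ∀ t, 0 ≤ t → ∀ v, i t v ∈ Set.Icc (0:ℝ) 1)
    (hderiv : ∀ t, 0 ≤ t → ∀ v : Fin n, HasDerivAt (fun τ => i τ v)
        (-(H v t) * i t v + G v t * (1 - i t v)) t)
    (hH : ∀ v, ∀ t, 0 ≤ t → H v t ∈ Set.Icc (hlo v) (hhi v))
    (hG : ∀ v, ∀ t, 0 ≤ t → G v t ∈ Set.Icc (glo v) (ghi v))
    (hlo_nonneg : ∀ v, 0 ≤ hlo v) (glo_nonneg : ∀ v, 0 ≤ glo v)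
    (hpos1 : ∀ v, 0 < hhi v + glo v) (hpos2 : ∀ v, 0 < hlo v + ghi v) :
    ∀ t, 0 ≤ t → ∀ v : Fin n,
      Real.exp (-(hhi v + glo v) * t) * (i 0 v - glo v / (hhi v + glo v))
          + glo v / (hhi v + glo v) ≤ i t v ∧
      i t v ≤ Real.exp (-(hlo v + ghi v) * t) * (i 0 v - ghi v / (hlo v + ghi v))
          + ghi v / (hlo v + ghi v) := by
  intro t ht v
  constructor
  · apply key_lower (hhi v + glo v) (glo v) (hpos1 v) (fun τ => i τ v)
      (fun τ => -(H v τ) * i τ v + G v τ * (1 - i τ v))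
      (fun s hs => hderiv s hs v) _ t ht
    intro s hs
    obtain ⟨hi0, hi1⟩ := hcube s hs v
    obtain ⟨hH1, hH2⟩ := hH v s hs
    obtain ⟨hG1, hG2⟩ := hG v s hs
    nlinarith
  · apply key_upper (hlo v + ghi v) (ghi v) (hpos2 v) (fun τ => i τ v)
      (fun τ => -(H v τ) * i τ v + G v τ * (1 - i τ v))
      (fun s hs => hderiv s hs v) _ t ht
    intro s hs
    obtain ⟨hi0, hi1⟩ := hcube s hs v
    obtain ⟨hH1, hH2⟩ := hH v s hs
    obtain ⟨hG1, hG2⟩ := hG v s hs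
    nlinarith
end

section
/- Let g : ℝ^n_{≥0} → ℝ be given by g(i) = 1 - (1-α)·∏_{u=1}^n (1 - γ_u i_u) with α ∈ [0,1] and γ_u ∈ [0,1]. Then g is subhomogeneous on [0,1]^n: for every η ∈ (0,1) and i ∈ [0,1]^n, g(ηi) ≥ η g(i). -/
lemma key_subhom {ι : Type*} (η : ℝ) (hη0 : 0 ≤ η) (hη1 : η ≤ 1)
    (s : Finset ι) (a : ι → ℝ) (ha : ∀ u ∈ s, a u ∈ Set.Icc (0:ℝ) 1) :
    ∏ u ∈ s, (1 - η * a u) ≤ 1 - η + η * ∏ u ∈ s, (1 - a u) := by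
  induction s using Finset.cons_induction with
  | empty => simp
  | cons u s hu ih =>
    have hau := ha u (Finset.mem_cons_self u s)
    have ha' : ∀ v ∈ s, a v ∈ Set.Icc (0:ℝ) 1 := fun v hv =>
      ha v (Finset.mem_cons_of_mem hv)
    have ih' := ih ha'
    have hQ0 : 0 ≤ ∏ v ∈ s, (1 - a v) :=
      Finset.prod_nonneg fun v hv => by have := ha' v hv; simp at this; linarith [this.2]
    have hQ1 : ∏ v ∈ s, (1 - a v) ≤ 1 :=
      Finset.prod_le_one (fun v hv => by have := ha' v hv; simp at this; linarith [this.2])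
        (fun v hv => by have := ha' v hv; simp at this; linarith [this.1])
    have hfac : 0 ≤ 1 - η * a u := by
      obtain ⟨h1, h2⟩ := hau
      nlinarith
    rw [Finset.prod_cons, Finset.prod_cons]
    have step : (1 - η * a u) * ∏ v ∈ s, (1 - η * a v) ≤
        (1 - η * a u) * (1 - η + η * ∏ v ∈ s, (1 - a v)) := by
      exact mul_le_mul_of_nonneg_left ih' hfac
    refine step.trans ?_
    obtain ⟨h1, h2⟩ := hau
    nlinarith [mul_nonneg h1 (mul_nonneg hη0 (sub_nonneg.mpr hη1))]

/-- The ∏-model infection function `g i = 1 - (1-α) ∏ᵤ (1 - γᵤ iᵤ)` is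
subhomogeneous on `[0,1]^n`: `g (η • i) ≥ η * g i` for `η ∈ (0,1)`. -/
theorem stmt_13 (n : ℕ) (α : ℝ) (γ : Fin n → ℝ)
    (hα : α ∈ Set.Icc (0:ℝ) 1) (hγ : ∀ u, γ u ∈ Set.Icc (0:ℝ) 1)
    (g : (Fin n → ℝ) → ℝ)
    (hg : ∀ x, g x = 1 - (1 - α) * ∏ u, (1 - γ u * x u)) :
    ∀ η : ℝ, η ∈ Set.Ioo (0:ℝ) 1 → ∀ x : Fin n → ℝ,
      (∀ u, x u ∈ Set.Icc (0:ℝ) 1) → η * g x ≤ g (η • x) := by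
  intro η hη x hx
  obtain ⟨hη0, hη1⟩ := hη
  rw [hg, hg]
  have ha : ∀ u ∈ (Finset.univ : Finset (Fin n)), γ u * x u ∈ Set.Icc (0:ℝ) 1 := by
    intro u _
    obtain ⟨hg1, hg2⟩ := hγ u
    obtain ⟨hx1, hx2⟩ := hx u
    constructor
    · exact mul_nonneg hg1 hx1
    · nlinarith
  have hkey := key_subhom η hη0.le hη1.le Finset.univ (fun u => γ u * x u) ha
  have heq : ∀ u, 1 - γ u * (η • x) u = 1 - η * (γ u * x u) := by
    intro u; simp [Pi.smul_apply, smul_eq_mul]; ring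
  simp only [heq]
  have hP0 : 0 ≤ ∏ u, (1 - γ u * x u) :=
    Finset.prod_nonneg fun u hu => by have := ha u hu; simp at this; linarith [this.2]
  obtain ⟨hα0, hα1⟩ := hα
  nlinarith [hkey, mul_le_mul_of_nonneg_left hkey (by linarith : (0:ℝ) ≤ 1 - α)]
end

section
/- In the unified model with no pull-based attacks (g(0) = 0), if f(i) ≤ C i componentwise for a constant matrix C with nonnegative off-diagonal entries whose maximum real-part eigenvalue λ₁(C) is negative, then every solution of i' = f(i(t)) with i(0) ∈ [0,1]^n converges to 0 as t → ∞. -/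
open scoped Pointwise


lemma aux_summable_of_submul {c : ℕ → ℝ} (hc0 : ∀ m, 0 ≤ c m)
    (hsub : ∀ a b, c (a + b) ≤ c a * c b) {k : ℕ} (hk : 0 < k) (hck : c k < 1) :
    Summable c := by
  set t := max (c k) (1/2) with ht
  have ht0 : 0 < t := lt_of_lt_of_le one_half_pos (le_max_right _ _)
  have ht1 : t < 1 := max_lt hck one_half_lt_one
  have hckt : c k ≤ t := le_max_left _ _
  have hq : ∀ q r, c (k * q + r) ≤ t ^ q * c r := by
    intro q
    induction q with
    | zero => intro r; simp
    | succ q ih =>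
      intro r
      have he : k * (q + 1) + r = k + (k * q + r) := by ring
      rw [he]
      calc c (k + (k * q + r)) ≤ c k * c (k * q + r) := hsub _ _
        _ ≤ t * (t ^ q * c r) :=
            mul_le_mul hckt (ih r) (hc0 _) ht0.le
        _ = t ^ (q + 1) * c r := by ring
  set u := t ^ ((k : ℝ)⁻¹) with hu
  have hu0 : 0 < u := Real.rpow_pos_of_pos ht0 _
  have hu1 : u < 1 := Real.rpow_lt_one ht0.le ht1 (by positivity)
  have huk : u ^ k = t := by
    rw [hu, ← Real.rpow_natCast (t ^ ((k : ℝ)⁻¹)) k, ← Real.rpow_mul ht0.le,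
      inv_mul_cancel₀ (by exact_mod_cast hk.ne'), Real.rpow_one]
  set S := ∑ r ∈ Finset.range k, c r with hS
  have hcrS : ∀ r, r < k → c r ≤ S := fun r hr =>
    Finset.single_le_sum (fun i _ => hc0 i) (Finset.mem_range.mpr hr)
  have hle : ∀ m, c m ≤ S / u ^ (k - 1) * u ^ m := by
    intro m
    have hm := Nat.div_add_mod m k
    have hmod : m % k < k := Nat.mod_lt _ hk
    have h1 : c m ≤ t ^ (m / k) * S := by
      calc c m = c (k * (m / k) + m % k) := by rw [hm]
        _ ≤ t ^ (m / k) * c (m % k) := hq _ _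
        _ ≤ t ^ (m / k) * S :=
            mul_le_mul_of_nonneg_left (hcrS _ hmod) (pow_nonneg ht0.le _)
    have h2 : t ^ (m / k) * u ^ (k - 1) ≤ u ^ m := by
      rw [← huk, ← pow_mul, ← pow_add]
      apply pow_le_pow_of_le_one hu0.le hu1.le
      omega
    have hukpos : 0 < u ^ (k - 1) := pow_pos hu0 _
    have hS0 : 0 ≤ S := Finset.sum_nonneg fun i _ => hc0 i
    calc c m ≤ t ^ (m / k) * S := h1
      _ ≤ S / u ^ (k - 1) * u ^ m := by
          rw [div_mul_eq_mul_div, le_div_iff₀ hukpos]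
          calc t ^ (m / k) * S * u ^ (k - 1) = (t ^ (m / k) * u ^ (k - 1)) * S := by ring
            _ ≤ u ^ m * S := mul_le_mul_of_nonneg_right h2 hS0
            _ = S * u ^ m := by ring
  exact Summable.of_nonneg_of_le hc0 hle
    ((summable_geometric_of_lt_one hu0.le hu1).mul_left _)

attribute [local instance] Matrix.linftyOpNormedRing Matrix.linftyOpNormedAlgebra

set_option maxHeartbeats 2000000 in
/-- For a Metzler matrix all of whose (complex) eigenvalues have negative real part,
there exists a strictly positive vector `w` with `D *ᵥ w ≤ -δ • w`. -/
lemma aux_metzler_hurwitz {n : ℕ} (hn : 0 < n) (D : Matrix (Fin n) (Fin n) ℝ)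
    (hM : ∀ i j : Fin n, i ≠ j → 0 ≤ D i j)
    (hspec : ∀ μ ∈ spectrum ℂ (D.map (algebraMap ℝ ℂ)), μ.re < 0) :
    ∃ w : Fin n → ℝ, (∀ v, 1 ≤ w v) ∧
      ∃ δ : ℝ, 0 < δ ∧ ∀ v, (D.mulVec w) v ≤ -δ * w v := by
  classical
  set Dc := D.map (algebraMap ℝ ℂ) with hDc
  -- Step 1: choose s
  obtain ⟨B, hB0, hB⟩ : ∃ B : ℝ, 0 ≤ B ∧
      ∀ μ ∈ spectrum ℂ Dc, Complex.normSq μ / (-2 * μ.re) ≤ B := by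
    rcases Set.eq_empty_or_nonempty (spectrum ℂ Dc) with h | h
    · exact ⟨0, le_refl _, by simp [h]⟩
    · have hcont : ContinuousOn (fun μ : ℂ => Complex.normSq μ / (-2 * μ.re))
          (spectrum ℂ Dc) := by
        apply ContinuousOn.div
        · exact Complex.continuous_normSq.continuousOn
        · exact (continuous_const.mul Complex.continuous_re).continuousOn
        · intro μ hμ
          have := hspec μ hμ
          nlinarith
      obtain ⟨μ₀, hμ₀, hmax⟩ := (spectrum.isCompact Dc).exists_isMaxOn h hcont
      refine ⟨Complex.normSq μ₀ / (-2 * μ₀.re), ?_, fun μ hμ => hmax hμ⟩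
      have h1 := hspec μ₀ hμ₀
      have h2 := Complex.normSq_nonneg μ₀
      have h3 : 0 < -2 * μ₀.re := by nlinarith
      positivity
  set d : ℝ := ∑ v, |D v v| with hd
  have hd0 : 0 ≤ d := Finset.sum_nonneg fun i _ => abs_nonneg _
  set s : ℝ := 1 + max B d with hs
  have hs0 : (0:ℝ) < s := by
    have : (0:ℝ) ≤ max B d := le_max_of_le_right hd0
    linarith
  have hsdiag : ∀ v, 0 ≤ D v v + s := by
    intro v
    have h1 : |D v v| ≤ d := Finset.single_le_sum (f := fun v => |D v v|)
      (fun i _ => abs_nonneg _) (Finset.mem_univ v)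
    have h2 : d ≤ max B d := le_max_right _ _
    have h3 : -D v v ≤ |D v v| := neg_le_abs _
    linarith
  have hsspec : ∀ μ ∈ spectrum ℂ Dc, ‖(s : ℂ) + μ‖ < s := by
    intro μ hμ
    have h1 : μ.re < 0 := hspec μ hμ
    have h2 : Complex.normSq μ / (-2 * μ.re) ≤ B := hB μ hμ
    have h3 : Complex.normSq μ ≤ B * (-2 * μ.re) := by
      rw [div_le_iff₀ (by nlinarith)] at h2; linarith [h2]
    have hBs : B < s := by
      have : B ≤ max B d := le_max_left _ _
      linarith
    have hsq : ‖(s : ℂ) + μ‖ ^ 2 < s ^ 2 := by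
      rw [Complex.sq_norm]
      have : Complex.normSq ((s:ℂ) + μ) = (s + μ.re)^2 + μ.im^2 := by
        simp [Complex.normSq_apply, Complex.add_re, Complex.add_im]
        ring
      rw [this]
      have hnsq : Complex.normSq μ = μ.re^2 + μ.im^2 := by
        simp [Complex.normSq_apply]; ring
      nlinarith
    exact lt_of_pow_lt_pow_left₀ 2 hs0.le hsq
  -- Step 2: Q and its complexification P
  haveI : Nonempty (Fin n) := ⟨⟨0, hn⟩⟩
  set Q : Matrix (Fin n) (Fin n) ℝ := s⁻¹ • (D + s • (1 : Matrix (Fin n) (Fin n) ℝ)) with hQ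
  have hQnn : ∀ v j, 0 ≤ Q v j := by
    intro v j
    rw [hQ]
    by_cases hvj : v = j
    · subst hvj
      simp [Matrix.smul_apply, Matrix.add_apply, Matrix.one_apply]
      have := hsdiag v
      positivity
    · simp [Matrix.smul_apply, Matrix.add_apply, Matrix.one_apply, hvj]
      have := hM v j hvj
      positivity
  set P : Matrix (Fin n) (Fin n) ℂ := Q.map (algebraMap ℝ ℂ) with hP
  have hPQ : P = ((s : ℂ))⁻¹ • (Dc + (s : ℂ) • (1 : Matrix (Fin n) (Fin n) ℂ)) := by
    ext v j
    by_cases hvj : v = j <;>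
      simp [hP, hQ, hDc, Matrix.map_apply, Matrix.smul_apply, Matrix.add_apply,
        Matrix.one_apply, hvj] <;> push_cast <;> ring
  -- spectral radius of P < 1
  have hsrad : spectralRadius ℂ P < 1 := by
    haveI : Nontrivial (Matrix (Fin n) (Fin n) ℂ) := ⟨⟨0, 1, fun h => by
      simpa using congrFun (congrFun h ⟨0, hn⟩) ⟨0, hn⟩⟩⟩
    have key : ∀ z ∈ spectrum ℂ P, ‖z‖₊ < 1 := by
      intro z hz
      have hsne : (s : ℂ) ≠ 0 := by exact_mod_cast hs0.ne'
      have hu : P = (Units.mk0 ((s : ℂ))⁻¹ (inv_ne_zero hsne)) • (Dc + (s : ℂ) • 1) := by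
        rw [hPQ]; rfl
      rw [hu, spectrum.unit_smul_eq_smul] at hz
      obtain ⟨ν, hν, hνz⟩ := hz
      have hspecadd : spectrum ℂ (Dc + (s : ℂ) • (1 : Matrix (Fin n) (Fin n) ℂ))
          = ({((s:ℝ) : ℂ)} : Set ℂ) + spectrum ℂ Dc := by
        have h1 : Dc + ((s:ℝ) : ℂ) • (1 : Matrix (Fin n) (Fin n) ℂ)
            = algebraMap ℂ (Matrix (Fin n) (Fin n) ℂ) ((s:ℝ):ℂ) + Dc := by
          rw [Algebra.algebraMap_eq_smul_one, add_comm]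
        rw [h1, ← spectrum.singleton_add_eq Dc ((s:ℝ):ℂ)]
      rw [hspecadd] at hν
      obtain ⟨a, ha, b, hb, hab⟩ := Set.mem_add.mp hν
      rw [Set.mem_singleton_iff] at ha
      subst ha
      have hnorm : ‖z‖ < 1 := by
        have hz' : z = ((s : ℂ))⁻¹ * ν := by
          rw [← hνz]; simp [Units.smul_def]
        rw [hz', ← hab, norm_mul, norm_inv]
        have h1 : ‖((s : ℝ) : ℂ)‖ = s := by
          rw [Complex.norm_real, Real.norm_eq_abs, abs_of_pos hs0]
        rw [h1]
        have h2 : ‖(s : ℂ) + b‖ < s := hsspec b hb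
        rw [inv_mul_lt_iff₀ hs0, mul_one]
        exact h2
      simpa [← NNReal.coe_lt_coe] using hnorm
    exact mod_cast spectrum.spectralRadius_lt_of_forall_lt P key
  -- Step 3: some power of P has norm < 1
  obtain ⟨k, hklt, hk1⟩ : ∃ k : ℕ, ‖P ^ k‖ < 1 ∧ 1 ≤ k := by
    have hG := spectrum.pow_nnnorm_pow_one_div_tendsto_nhds_spectralRadius P
    have hev : ∀ᶠ m : ℕ in Filter.atTop,
        ((‖P ^ m‖₊ : ENNReal) ^ (1 / (m:ℝ)) < 1) := by
      have h1 : spectralRadius ℂ P < (1 : ENNReal) := by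
        simpa using hsrad
      exact hG.eventually_lt_const h1
    obtain ⟨k, hk, hk1⟩ := (hev.and (Filter.eventually_ge_atTop 1)).exists
    refine ⟨k, ?_, hk1⟩
    by_contra hcon
    push_neg at hcon
    have h1 : (1 : ENNReal) ≤ (‖P ^ k‖₊ : ENNReal) := by
      exact_mod_cast (by simpa [← NNReal.coe_le_coe] using hcon : (1:NNReal) ≤ ‖P ^ k‖₊)
    have h2 : (1 : ENNReal) ≤ (‖P ^ k‖₊ : ENNReal) ^ (1 / (k:ℝ)) := by
      calc (1 : ENNReal) = 1 ^ (1 / (k:ℝ)) := by rw [ENNReal.one_rpow]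
        _ ≤ (‖P ^ k‖₊ : ENNReal) ^ (1 / (k:ℝ)) :=
            ENNReal.rpow_le_rpow h1 (by positivity)
    exact absurd hk (not_lt.mpr h2)
  -- Step 4: summability of the norms
  have hc : Summable (fun m : ℕ => ‖P ^ m‖) := by
    apply aux_summable_of_submul (fun m => norm_nonneg _) _ hk1 hklt
    intro a b
    rw [pow_add]
    exact norm_mul_le _ _
  -- Step 5: the vector w
  set x : ℕ → Fin n → ℝ := fun m => (Q ^ m).mulVec (fun _ => 1) with hx
  have hQpow_nn : ∀ m : ℕ, ∀ v j, 0 ≤ (Q ^ m) v j := by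
    intro m
    induction m with
    | zero => intro v j; by_cases h : v = j <;> simp [Matrix.one_apply, h]
    | succ m ih =>
      intro v j
      rw [pow_succ, Matrix.mul_apply]
      exact Finset.sum_nonneg fun l _ => mul_nonneg (ih v l) (hQnn l j)
  have hxnn : ∀ m v, 0 ≤ x m v := by
    intro m v
    simp only [hx, Matrix.mulVec, dotProduct, mul_one]
    exact Finset.sum_nonneg fun j _ => hQpow_nn m v j
  have hmap_pow : ∀ m : ℕ, (Q ^ m).map (algebraMap ℝ ℂ) = P ^ m := by
    intro m
    have h1 : ∀ M : Matrix (Fin n) (Fin n) ℝ,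
        M.map (algebraMap ℝ ℂ) = (algebraMap ℝ ℂ).mapMatrix M := fun _ => rfl
    rw [h1, map_pow]
    rfl
  have hxle : ∀ m v, x m v ≤ ‖P ^ m‖ := by
    intro m v
    have h1 : x m v = ∑ j, (Q ^ m) v j := by
      simp [hx, Matrix.mulVec, dotProduct]
    have h2 : (∑ j, ‖(P ^ m) v j‖₊ : NNReal) ≤ ‖P ^ m‖₊ := by
      rw [Matrix.linfty_opNNNorm_def]
      exact Finset.le_sup (f := fun i => ∑ j, ‖(P ^ m) i j‖₊) (Finset.mem_univ v)
    have h3 : ∑ j, ‖(P ^ m) v j‖ ≤ ‖P ^ m‖ := by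
      have := NNReal.coe_le_coe.mpr h2
      simpa [NNReal.coe_sum] using this
    refine le_trans (le_of_eq ?_) h3
    rw [h1]
    apply Finset.sum_congr rfl
    intro j _
    rw [← hmap_pow m]
    simp only [Matrix.map_apply]
    have he : (algebraMap ℝ ℂ) ((Q ^ m) v j) = (((Q ^ m) v j : ℝ) : ℂ) := rfl
    rw [he, Complex.norm_real, Real.norm_eq_abs, abs_of_nonneg (hQpow_nn m v j)]
  have hsum : ∀ v, Summable (fun m => x m v) := fun v =>
    Summable.of_nonneg_of_le (fun m => hxnn m v) (fun m => hxle m v) hc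
  set w : Fin n → ℝ := fun v => ∑' m, x m v with hw
  have hx0 : ∀ v, x 0 v = 1 := by
    intro v
    simp [hx, Matrix.one_mulVec]
  have hw1 : ∀ v, 1 ≤ w v := by
    intro v
    have := Summable.le_tsum (hsum v) 0 (fun m _ => hxnn m v)
    rwa [hx0 v] at this
  -- Q *ᵥ w = w - 1
  have hQw : ∀ v, (Q.mulVec w) v = w v - 1 := by
    intro v
    have h1 : (Q.mulVec w) v = ∑ j, Q v j * w j := by
      simp [Matrix.mulVec, dotProduct]
    have h2 : ∀ j, Q v j * w j = ∑' m, Q v j * x m j := by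
      intro j
      rw [tsum_mul_left]
    have h3 : (Q.mulVec w) v = ∑' m, ∑ j, Q v j * x m j := by
      have h3a : ∑ j, Q v j * w j = ∑ j, ∑' m, Q v j * x m j :=
        Finset.sum_congr rfl fun j _ => h2 j
      have h3b := Summable.tsum_finsetSum (f := fun j m => Q v j * x m j)
        (fun j (_ : j ∈ Finset.univ) => (hsum j).mul_left (Q v j))
      rw [h1, h3a, ← h3b]
    have h4 : ∀ m : ℕ, ∑ j, Q v j * x m j = x (m + 1) v := by
      intro m
      have : x (m + 1) = Q.mulVec (x m) := by
        rw [hx]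
        simp only
        rw [Matrix.mulVec_mulVec, ← pow_succ']
      rw [this]
      simp [Matrix.mulVec, dotProduct]
    rw [h3]
    have h5 : ∑' m : ℕ, x (m + 1) v = w v - 1 := by
      have := Summable.tsum_eq_zero_add (hsum v)
      rw [hx0 v] at this
      have h6 : Summable (fun m => x (m + 1) v) := (summable_nat_add_iff 1).mpr (hsum v)
      linarith [this]
    rw [← h5]
    exact tsum_congr fun m => h4 m
  -- D *ᵥ w = -s
  have hDw : ∀ v, (D.mulVec w) v = -s := by
    intro v
    have hsQ : ∀ a b, D a b = s * Q a b - (if a = b then s else 0) := by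
      intro a b
      rw [hQ]
      by_cases h : a = b <;>
        · simp [Matrix.smul_apply, Matrix.add_apply, Matrix.one_apply, h]
          field_simp
          all_goals ring
    have h1 : (D.mulVec w) v = ∑ j, D v j * w j := by
      simp [Matrix.mulVec, dotProduct]
    rw [h1]
    have h2 : ∑ j, D v j * w j = s * (∑ j, Q v j * w j) - s * w v := by
      have e1 : ∀ j, D v j * w j = s * (Q v j * w j) - (if v = j then s else 0) * w j := by
        intro j; rw [hsQ v j]; ring
      rw [Finset.sum_congr rfl fun j _ => e1 j, Finset.sum_sub_distrib, ← Finset.mul_sum]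
      congr 1
      have e2 : ∀ j, (if v = j then s else 0) * w j = if v = j then s * w j else 0 := by
        intro j; by_cases h : v = j <;> simp [h]
      rw [Finset.sum_congr rfl fun j _ => e2 j, Finset.sum_ite_eq]
      simp
    have h3 : ∑ j, Q v j * w j = w v - 1 := by
      have := hQw v
      simpa [Matrix.mulVec, dotProduct] using this
    rw [h2, h3]
    ring
  -- choose δ
  have hne : (Finset.univ : Finset (Fin n)).Nonempty := Finset.univ_nonempty
  set M := Finset.univ.sup' hne w with hM2
  have hMw : ∀ v, w v ≤ M := fun v => Finset.le_sup' w (Finset.mem_univ v)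
  obtain ⟨v0⟩ := ‹Nonempty (Fin n)›
  have hM1 : (1:ℝ) ≤ M := le_trans (hw1 v0) (hMw v0)
  have hM0 : (0:ℝ) < M := lt_of_lt_of_le one_pos hM1
  refine ⟨w, hw1, s / M, by positivity, ?_⟩
  intro v
  rw [hDw v]
  have hle : s / M * w v ≤ s / M * M :=
    mul_le_mul_of_nonneg_left (hMw v) (by positivity)
  rw [div_mul_cancel₀ _ hM0.ne'] at hle
  linarith

lemma aux_spectrum_transpose {n : ℕ} (C : Matrix (Fin n) (Fin n) ℝ) :
    spectrum ℂ ((C.transpose).map (algebraMap ℝ ℂ)) = spectrum ℂ (C.map (algebraMap ℝ ℂ)) := by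
  ext μ
  simp only [spectrum.mem_iff]
  have h1 : (C.transpose).map (algebraMap ℝ ℂ) = (C.map (algebraMap ℝ ℂ)).transpose := by
    ext a b; simp [Matrix.transpose_apply, Matrix.map_apply]
  have h2 : algebraMap ℂ (Matrix (Fin n) (Fin n) ℂ) μ - (C.map (algebraMap ℝ ℂ)).transpose
      = (algebraMap ℂ (Matrix (Fin n) (Fin n) ℂ) μ - C.map (algebraMap ℝ ℂ)).transpose := by
    rw [Matrix.transpose_sub]
    congr 1
    rw [Algebra.algebraMap_eq_smul_one, Matrix.transpose_smul, Matrix.transpose_one]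
  rw [h1, h2, Matrix.isUnit_iff_isUnit_det, Matrix.det_transpose,
    ← Matrix.isUnit_iff_isUnit_det]

/-- With no pull-based attacks (`f 0 = 0`): if `f` is cooperative, locally Lipschitz,
dominated componentwise on the unit cube by a Metzler matrix `C` all of whose
eigenvalues have negative real part, then every solution starting in `[0,1]^n`
(and remaining there) converges to `0`. -/
theorem stmt_18 (n : ℕ) (f : (Fin n → ℝ) → (Fin n → ℝ))
    (C : Matrix (Fin n) (Fin n) ℝ)
    (hLip : LocallyLipschitz f)
    (hcoop : ∀ x y : Fin n → ℝ, x ≤ y → ∀ v, x v = y v → f x v ≤ f y v)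
    (hf0 : f 0 = 0)
    (hMetzler : ∀ i j : Fin n, i ≠ j → 0 ≤ C i j)
    (hspec : ∀ μ ∈ spectrum ℂ (C.map (algebraMap ℝ ℂ)), μ.re < 0)
    (hdom : ∀ x : Fin n → ℝ, (∀ v, x v ∈ Set.Icc (0:ℝ) 1) → f x ≤ C.mulVec x)
    (i : ℝ → Fin n → ℝ)
    (hderiv : ∀ t, 0 ≤ t → HasDerivAt i (f (i t)) t)
    (hcube : ∀ t, 0 ≤ t → ∀ v, i t v ∈ Set.Icc (0:ℝ) 1) :
    Filter.Tendsto i Filter.atTop (nhds 0) := by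
  rcases Nat.eq_zero_or_pos n with hn0 | hn
  · subst hn0
    have : i = fun _ => 0 := funext fun t => funext fun v => v.elim0
    rw [this]
    exact tendsto_const_nhds
  -- get the positive vector w for C.transpose
  obtain ⟨w, hw1, δ, hδ0, hwD⟩ := aux_metzler_hurwitz hn C.transpose
    (fun a b hab => hMetzler b a (Ne.symm hab))
    (by rw [aux_spectrum_transpose]; exact hspec)
  have hw0 : ∀ v, (0:ℝ) < w v := fun v => lt_of_lt_of_le one_pos (hw1 v)
  -- the Lyapunov function
  set V : ℝ → ℝ := fun t => ∑ v, w v * i t v with hV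
  have hVderiv : ∀ t, 0 ≤ t → HasDerivAt V (∑ v, w v * f (i t) v) t := by
    intro t ht
    exact HasDerivAt.fun_sum fun v _ =>
      ((hasDerivAt_pi.mp (hderiv t ht)) v).const_mul (w v)
  have hVnn : ∀ t, 0 ≤ t → 0 ≤ V t := fun t ht =>
    Finset.sum_nonneg fun v _ => mul_nonneg (hw0 v).le (hcube t ht v).1
  -- derivative bound
  have hVle : ∀ t, 0 ≤ t → (∑ v, w v * f (i t) v) ≤ -δ * V t := by
    intro t ht
    have h1 : f (i t) ≤ C.mulVec (i t) := hdom (i t) (hcube t ht)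
    have h2 : ∑ v, w v * f (i t) v ≤ ∑ v, w v * (C.mulVec (i t)) v :=
      Finset.sum_le_sum fun v _ => mul_le_mul_of_nonneg_left (h1 v) (hw0 v).le
    have h3 : ∑ v, w v * (C.mulVec (i t)) v = ∑ j, (C.transpose.mulVec w) j * i t j := by
      simp only [Matrix.mulVec, dotProduct, Finset.mul_sum, Finset.sum_mul]
      rw [Finset.sum_comm]
      apply Finset.sum_congr rfl; intro j _
      apply Finset.sum_congr rfl; intro v _
      rw [Matrix.transpose_apply]; ring
    have h4 : ∑ j, (C.transpose.mulVec w) j * i t j ≤ ∑ j, (-δ * w j) * i t j := by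
      apply Finset.sum_le_sum
      intro j _
      exact mul_le_mul_of_nonneg_right (hwD j) (hcube t ht j).1
    have h5 : ∑ j, (-δ * w j) * i t j = -δ * V t := by
      rw [hV, Finset.mul_sum]
      apply Finset.sum_congr rfl; intro j _; ring
    calc ∑ v, w v * f (i t) v ≤ ∑ v, w v * (C.mulVec (i t)) v := h2
      _ = ∑ j, (C.transpose.mulVec w) j * i t j := h3
      _ ≤ ∑ j, (-δ * w j) * i t j := h4
      _ = -δ * V t := h5
  -- exponential decay of V
  have hkey : ∀ t, 0 ≤ t → V t ≤ V 0 * Real.exp (-δ * t) := by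
    intro t ht
    set g : ℝ → ℝ := fun t => Real.exp (δ * t) * V t with hg
    have hgderiv : ∀ u, 0 ≤ u → HasDerivAt g
        (δ * Real.exp (δ * u) * V u + Real.exp (δ * u) * (∑ v, w v * f (i u) v)) u := by
      intro u hu
      have he : HasDerivAt (fun t : ℝ => Real.exp (δ * t)) (Real.exp (δ * u) * (δ * 1)) u :=
        HasDerivAt.exp ((hasDerivAt_id u).const_mul δ)
      have := he.fun_mul (hVderiv u hu)
      exact this.congr_deriv (by ring)
    have hanti : AntitoneOn g (Set.Ici 0) := by
      apply antitoneOn_of_deriv_nonpos (convex_Ici 0)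
      · intro u hu
        exact ((hgderiv u hu).continuousAt).continuousWithinAt
      · intro u hu
        rw [interior_Ici] at hu
        exact ((hgderiv u (le_of_lt hu)).differentiableAt).differentiableWithinAt
      · intro u hu
        rw [interior_Ici] at hu
        have hu0 : (0:ℝ) ≤ u := le_of_lt hu
        rw [(hgderiv u hu0).deriv]
        have h1 := hVle u hu0
        have h2 : (0:ℝ) < Real.exp (δ * u) := Real.exp_pos _
        calc δ * Real.exp (δ * u) * V u + Real.exp (δ * u) * (∑ v, w v * f (i u) v)
            ≤ δ * Real.exp (δ * u) * V u + Real.exp (δ * u) * (-δ * V u) := by nlinarith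
          _ = 0 := by ring
    have := hanti (Set.self_mem_Ici) ht ht
    rw [hg] at this
    simp only [mul_zero, Real.exp_zero, one_mul] at this
    -- this : exp (δ * t) * V t ≤ V 0
    have h6 := mul_le_mul_of_nonneg_right this (Real.exp_pos (-(δ * t))).le
    rw [mul_comm (Real.exp (δ * t)) (V t), mul_assoc, ← Real.exp_add] at h6
    simpa [neg_mul] using h6
  -- squeeze each coordinate
  rw [tendsto_pi_nhds]
  intro v
  have hup : ∀ t, 0 ≤ t → i t v ≤ (V 0 / w v) * Real.exp (-δ * t) := by
    intro t ht
    have h1 : w v * i t v ≤ V t := by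
      rw [hV]
      exact Finset.single_le_sum
        (fun j _ => mul_nonneg (hw0 j).le (hcube t ht j).1) (Finset.mem_univ v)
    have h2 := hkey t ht
    rw [div_mul_eq_mul_div, le_div_iff₀ (hw0 v)]
    calc i t v * w v = w v * i t v := by ring
      _ ≤ V 0 * Real.exp (-δ * t) := le_trans h1 h2
  have hlimexp : Filter.Tendsto (fun t : ℝ => (V 0 / w v) * Real.exp (-δ * t))
      Filter.atTop (nhds 0) := by
    have hmt : Filter.Tendsto (fun t : ℝ => δ * t) Filter.atTop Filter.atTop :=
      Filter.Tendsto.const_mul_atTop hδ0 Filter.tendsto_id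
    have h0 : Filter.Tendsto (fun t : ℝ => Real.exp (-δ * t)) Filter.atTop (nhds 0) := by
      exact (Real.tendsto_exp_neg_atTop_nhds_zero.comp hmt).congr
        (fun t => by simp [Function.comp, neg_mul])
    simpa using h0.const_mul (V 0 / w v)
  apply squeeze_zero' (t₀ := Filter.atTop)
  · filter_upwards [Filter.eventually_ge_atTop (0:ℝ)] with t ht
    exact (hcube t ht v).1
  · filter_upwards [Filter.eventually_ge_atTop (0:ℝ)] with t ht
    exact hup t ht
  · exact hlimexp
end
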